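/- For any synchronizing automaton 𝒜 with n ≥ 2 states, any v-minimal word u, any i ∈ supp(u), and any g ∈ ℐ_i, there is a word z ∈ Σ* with |z| ≤ D(2, Rnk(ℐ_i), n) such that g·θ_i(z) ∼_i 0_i. -/

import Mathlib

open scoped BigOperators

set_option synthInstance.maxHeartbeats 1000000
set_option maxHeartbeats 1000000

noncomputable section

/-- Action of a word on a state: `q · u`. -/
def actW {Q A : Type*} (δ : Q → A → Q) (q : Q) (u : List A) : Q :=
  u.foldl δ q

/-- The image `Q · u` of the full state set under a word. -/
def imageSet {Q A : Type*} [Fintype Q] [DecidableEq Q] (δ : Q → A → Q) (u : List A) :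
    Finset Q :=
  Finset.image (fun q => actW δ q u) Finset.univ

/-- The rank `rk(u) = |Q · u|` of a word. -/
def wordRank {Q A : Type*} [Fintype Q] [DecidableEq Q] (δ : Q → A → Q) (u : List A) : ℕ :=
  (imageSet δ u).card

/-- A word is reset (synchronizing) if `|Q · u| = 1`. -/
def IsReset {Q A : Type*} [Fintype Q] [DecidableEq Q] (δ : Q → A → Q) (u : List A) : Prop :=
  wordRank δ u = 1

/-- The automaton is synchronizing if it admits a reset word. -/
def IsSynchronizing {Q A : Type*} [Fintype Q] [DecidableEq Q] (δ : Q → A → Q) : Prop :=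
  ∃ u : List A, IsReset δ u

/-- `Syn(𝒜)`, the set of reset words. -/
def SynWords {Q A : Type*} [Fintype Q] [DecidableEq Q] (δ : Q → A → Q) : Set (List A) :=
  {u | IsReset δ u}

/-- The hyperplane `w⊥ = {v ∈ ℂQ : ∑ q, v q = 0}`. -/
def Wperp (Q : Type*) [Fintype Q] : Submodule ℂ (Q → ℂ) :=
  LinearMap.ker (∑ q : Q, (LinearMap.proj q : (Q → ℂ) →ₗ[ℂ] ℂ))

theorem mem_Wperp {Q : Type*} [Fintype Q] (v : Q → ℂ) :
    v ∈ Wperp Q ↔ ∑ q : Q, v q = 0 := by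
  simp [Wperp, LinearMap.mem_ker, LinearMap.sum_apply]

/-- The (right) action of a word on row vectors `v ↦ v·π(u)`. -/
def piLin {Q A : Type*} [Fintype Q] [DecidableEq Q] (δ : Q → A → Q) (u : List A) :
    (Q → ℂ) →ₗ[ℂ] (Q → ℂ) where
  toFun v := fun p => ∑ q ∈ Finset.univ.filter (fun q => actW δ q u = p), v q
  map_add' := by
    intro a b; funext p; simp [Finset.sum_add_distrib]
  map_smul' := by
    intro c v; funext p; simp [Finset.mul_sum]

theorem piLin_mem {Q A : Type*} [Fintype Q] [DecidableEq Q] (δ : Q → A → Q) (u : List A) :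
    ∀ v ∈ Wperp Q, piLin δ u v ∈ Wperp Q := by
  intro v hv
  rw [mem_Wperp] at hv ⊢
  have h := Finset.sum_fiberwise (Finset.univ : Finset Q) (fun q => actW δ q u) v
  calc ∑ p : Q, piLin δ u v p
      = ∑ p : Q, ∑ q ∈ Finset.univ.filter (fun q => actW δ q u = p), v q := rfl
    _ = ∑ q : Q, v q := h
    _ = 0 := hv

/-- The endomorphism of `w⊥` induced by a word. -/
def rhoEnd {Q A : Type*} [Fintype Q] [DecidableEq Q] (δ : Q → A → Q) (u : List A) :
    Module.End ℂ (Wperp Q) :=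
  (piLin δ u).restrict (piLin_mem δ u)

/-- The representation `ρ : Σ* → End(w⊥)`; we record it in the multiplicative opposite so
that `ρ (u ++ v) = ρ u * ρ v` (the paper's right-action convention). -/
def rho {Q A : Type*} [Fintype Q] [DecidableEq Q] (δ : Q → A → Q) (u : List A) :
    (Module.End ℂ (Wperp Q))ᵐᵒᵖ :=
  MulOpposite.op (rhoEnd δ u)

/-- `ℛ`, the ℂ-subalgebra generated by `ρ(Σ*)`. -/
def Ralg {Q A : Type*} [Fintype Q] [DecidableEq Q] (δ : Q → A → Q) :
    Subalgebra ℂ (Module.End ℂ (Wperp Q))ᵐᵒᵖ :=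
  Algebra.adjoin ℂ (Set.range (rho δ))

/-- `ρ(u)` seen as an element of `ℛ`. -/
def rhoR {Q A : Type*} [Fintype Q] [DecidableEq Q] (δ : Q → A → Q) (u : List A) :
    Ralg δ :=
  ⟨rho δ u, Algebra.subset_adjoin (Set.mem_range_self u)⟩

/-- The Jacobson radical `Rad(ℛ)` of `ℛ`, realised as a subset of the ambient algebra via
the standard characterisation: `x ∈ Rad(ℛ)` iff `x ∈ ℛ` and for every `y ∈ ℛ` the element
`1 - y * x` is left-invertible in `ℛ`. -/
def RadSet {Q A : Type*} [Fintype Q] [DecidableEq Q] (δ : Q → A → Q) :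
    Set (Module.End ℂ (Wperp Q))ᵐᵒᵖ :=
  {x | x ∈ Ralg δ ∧ ∀ y ∈ Ralg δ, ∃ z ∈ Ralg δ, z * (1 - y * x) = 1}

/-- `Rad(𝒜)`: the set of radical words, i.e. words `u` with `ρ(u) ∈ Rad(ℛ)`. -/
def RadWords {Q A : Type*} [Fintype Q] [DecidableEq Q] (δ : Q → A → Q) : Set (List A) :=
  {u | rho δ u ∈ RadSet δ}

/-- The automaton is semisimple when `Rad(𝒜) = Syn(𝒜)`. -/
def IsSemisimple {Q A : Type*} [Fintype Q] [DecidableEq Q] (δ : Q → A → Q) : Prop :=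
  RadWords δ = SynWords δ

/-- The `t`-packing number `D(t,r,n)`: the maximum size of a family of `r`-subsets of an
`n`-set in which every `t`-subset is contained in at most one member. -/
def packingNumber (t r n : ℕ) : ℕ :=
  sSup {m | ∃ F : Finset (Finset (Fin n)), F.card = m ∧ (∀ S ∈ F, S.card = r) ∧
    ∀ T : Finset (Fin n), T.card = t → (F.filter fun S => T ⊆ S).card ≤ 1}

/-- The former-rank `Fr(𝒜)`: the least rank of a non-reset word. -/
def formerRank {Q A : Type*} [Fintype Q] [DecidableEq Q] (δ : Q → A → Q) : ℕ :=
  sInf {m | ∃ u : List A, ¬ IsReset δ u ∧ wordRank δ u = m}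

/-- `Fs(𝒜)`: the set of former-synchronizing words. -/
def Fs {Q A : Type*} [Fintype Q] [DecidableEq Q] (δ : Q → A → Q) : Set (List A) :=
  {u | wordRank δ u = formerRank δ}

/-- `θ_i(u)`: the image of `ρ(u)` in the `i`-th Wedderburn–Artin matrix component, where
`e : ℛ → ∏ i, M_{n_i}(ℂ)` is the quotient map `ψ` followed by the fixed isomorphism. -/
def theta {Q A : Type*} [Fintype Q] [DecidableEq Q] (δ : Q → A → Q) {k : ℕ} {nn : Fin k → ℕ}
    (e : Ralg δ →ₐ[ℂ] ∀ i : Fin k, Matrix (Fin (nn i)) (Fin (nn i)) ℂ)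
    (u : List A) (i : Fin k) : Matrix (Fin (nn i)) (Fin (nn i)) ℂ :=
  e (rhoR δ u) i

/-- `supp(v) = {i : θ_i(v) ≠ 0}`. -/
def suppW {Q A : Type*} [Fintype Q] [DecidableEq Q] (δ : Q → A → Q) {k : ℕ} {nn : Fin k → ℕ}
    (e : Ralg δ →ₐ[ℂ] ∀ i : Fin k, Matrix (Fin (nn i)) (Fin (nn i)) ℂ)
    (v : List A) : Set (Fin k) :=
  {i | theta δ e v i ≠ 0}

/-- `u ∈ Σ* v Σ*`, i.e. `v` is a factor of `u`. -/
def InFactor {A : Type*} (v u : List A) : Prop :=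
  ∃ a b : List A, u = a ++ v ++ b

/-- `u` is a `v`-minimal word: `u ∈ Σ*vΣ*`, `supp(u)` is nonempty, and `supp(u)` is minimal
among the nonempty supports of words in `Σ*vΣ*`. -/
def IsVMinimal {Q A : Type*} [Fintype Q] [DecidableEq Q] (δ : Q → A → Q) {k : ℕ}
    {nn : Fin k → ℕ}
    (e : Ralg δ →ₐ[ℂ] ∀ i : Fin k, Matrix (Fin (nn i)) (Fin (nn i)) ℂ)
    (v u : List A) : Prop :=
  InFactor v u ∧ (suppW δ e u).Nonempty ∧
    ∀ z : List A, InFactor v z → suppW δ e z ⊆ suppW δ e u →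
      suppW δ e z = ∅ ∨ suppW δ e z = suppW δ e u

/-- The `i`-th factor monoid `ℳ_i = θ_i(Σ*)`. -/
def factorMonoid {Q A : Type*} [Fintype Q] [DecidableEq Q] (δ : Q → A → Q) {k : ℕ}
    {nn : Fin k → ℕ}
    (e : Ralg δ →ₐ[ℂ] ∀ i : Fin k, Matrix (Fin (nn i)) (Fin (nn i)) ℂ)
    (i : Fin k) : Set (Matrix (Fin (nn i)) (Fin (nn i)) ℂ) :=
  Set.range fun u : List A => theta δ e u i

/-- A two-sided ideal of the (sub)monoid `M`. -/
def IsSetIdeal {X : Type*} [Mul X] (M I : Set X) : Prop :=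
  I ⊆ M ∧ ∀ a ∈ M, ∀ x ∈ I, a * x ∈ I ∧ x * a ∈ I

/-- `I` is a `0`-minimal (two-sided) ideal of the monoid `M`. -/
def IsZeroMinimalIdeal {X : Type*} [Mul X] [Zero X] (M I : Set X) : Prop :=
  IsSetIdeal M I ∧ (0 : X) ∈ I ∧ I ≠ {0} ∧
    ∀ J : Set X, IsSetIdeal M J → (0 : X) ∈ J → J ⊆ I → J ≠ {0} → J = I

/-- `Rnk_i(g) = min {rk(u) : θ_i(u) = g}`. -/
def rnkElt {Q A : Type*} [Fintype Q] [DecidableEq Q] (δ : Q → A → Q) {k : ℕ}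
    {nn : Fin k → ℕ}
    (e : Ralg δ →ₐ[ℂ] ∀ i : Fin k, Matrix (Fin (nn i)) (Fin (nn i)) ℂ)
    (i : Fin k) (g : Matrix (Fin (nn i)) (Fin (nn i)) ℂ) : ℕ :=
  sInf {m | ∃ u : List A, theta δ e u i = g ∧ wordRank δ u = m}

/-- `Rnk(ℐ_i) = min {Rnk_i(g) : g ∈ ℐ_i ∖ {0}}`. -/
def rnkIdeal {Q A : Type*} [Fintype Q] [DecidableEq Q] (δ : Q → A → Q) {k : ℕ}
    {nn : Fin k → ℕ}
    (e : Ralg δ →ₐ[ℂ] ∀ i : Fin k, Matrix (Fin (nn i)) (Fin (nn i)) ℂ)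
    (i : Fin k) (I : Set (Matrix (Fin (nn i)) (Fin (nn i)) ℂ)) : ℕ :=
  sInf {m | ∃ g ∈ I, g ≠ 0 ∧ rnkElt δ e i g = m}

/-- `w` `u`-represents `g`: `w ∈ Σ*uΣ*`, `θ_i(w) = g`, and either `g = 0` or `rk(w)` is
minimum among all words with the first two properties. -/
def URepresents {Q A : Type*} [Fintype Q] [DecidableEq Q] (δ : Q → A → Q) {k : ℕ}
    {nn : Fin k → ℕ}
    (e : Ralg δ →ₐ[ℂ] ∀ i : Fin k, Matrix (Fin (nn i)) (Fin (nn i)) ℂ)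
    (u : List A) (i : Fin k) (w : List A) (g : Matrix (Fin (nn i)) (Fin (nn i)) ℂ) : Prop :=
  InFactor u w ∧ theta δ e w i = g ∧
    (g = 0 ∨ ∀ w' : List A, InFactor u w' → theta δ e w' i = g → wordRank δ w ≤ wordRank δ w')

/-- The relation `σ_i` on `ℐ_i`. -/
def sigmaRel {Q A : Type*} [Fintype Q] [DecidableEq Q] (δ : Q → A → Q) {k : ℕ}
    {nn : Fin k → ℕ}
    (e : Ralg δ →ₐ[ℂ] ∀ i : Fin k, Matrix (Fin (nn i)) (Fin (nn i)) ℂ)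
    (i : Fin k) (u : List A)
    (g f : Matrix (Fin (nn i)) (Fin (nn i)) ℂ) : Prop :=
  g = f ∨ ∃ w₁ w₂ : List A, URepresents δ e u i w₁ g ∧ URepresents δ e u i w₂ f ∧
    1 < (imageSet δ w₁ ∩ imageSet δ w₂).card

/-- `T ⊆ [1,k]` is a core. -/
def IsCore {Q A : Type*} [Fintype Q] [DecidableEq Q] (δ : Q → A → Q) {k : ℕ}
    {nn : Fin k → ℕ}
    (e : Ralg δ →ₐ[ℂ] ∀ i : Fin k, Matrix (Fin (nn i)) (Fin (nn i)) ℂ)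
    (T : Set (Fin k)) : Prop :=
  ∀ x : List A, (∀ i ∈ T, theta δ e x i = 0) → ∀ i : Fin k, theta δ e x i = 0

/-- A minimal core. -/
def IsMinimalCore {Q A : Type*} [Fintype Q] [DecidableEq Q] (δ : Q → A → Q) {k : ℕ}
    {nn : Fin k → ℕ}
    (e : Ralg δ →ₐ[ℂ] ∀ i : Fin k, Matrix (Fin (nn i)) (Fin (nn i)) ℂ)
    (T : Set (Fin k)) : Prop :=
  IsCore δ e T ∧ ∀ T' : Set (Fin k), T' ⊆ T → IsCore δ e T' → T' = T

/-- An automaton congruence. -/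
def IsCongruence {Q A : Type*} (δ : Q → A → Q) (σ : Q → Q → Prop) : Prop :=
  Equivalence σ ∧ ∀ q p : Q, σ q p → ∀ u : List A, σ (actW δ q u) (actW δ p u)

/-- A simple automaton: the only congruences are the identity and the universal relation. -/
def IsSimple {Q A : Type*} (δ : Q → A → Q) : Prop :=
  ∀ σ : Q → Q → Prop, IsCongruence δ σ → σ = Eq ∨ σ = fun _ _ => True

/-!
Fix a word `x` containing `u` with `θ_i(x) = g` and `rk(x) ≤ r = Rnk(ℐ_i)`, and a shortest `y`
with `g θ_i(y) ∼_i 0` (a reset word is such a `y`). For every proper prefix `y'` of `y`,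
`g θ_i(y')` is a nonzero element of `ℐ_i`, so `Q·xy'` has exactly `r` states and `xy'`
`u`-represents it. If `|y| > D(2, r, n)` these sets are not a packing: two of them, for prefixes
`y₁` shorter than `y₂`, share two states `p ≠ q`. Writing `y = y₂ s`, the word `y₁ s` is
shorter than `y`; if `p·s = q·s` then `rk(x y₁ s) < r`, so `g θ_i(y₁ s) = 0`, and otherwise
`Q·x y₁ s` and `Q·x y` share `p·s ≠ q·s`, so `g θ_i(y₁ s) σ_i g θ_i(y)`. Either way
`g θ_i(y₁ s) ∼_i 0`, contradicting the choice of `y`.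
-/

section Words

variable {Q A : Type*} (δ : Q → A → Q)

theorem actW_append (q : Q) (x y : List A) : actW δ q (x ++ y) = actW δ (actW δ q x) y :=
  List.foldl_append ..

theorem InFactor.append_right {u x : List A} (h : InFactor u x) (y : List A) :
    InFactor u (x ++ y) := by
  obtain ⟨a, b, rfl⟩ := h
  exact ⟨a, b ++ y, by simp⟩

variable [Fintype Q] [DecidableEq Q]

theorem imageSet_append (x y : List A) :
    imageSet δ (x ++ y) = (imageSet δ x).image (fun q => actW δ q y) := by
  simp only [imageSet, Finset.image_image, Function.comp_def, actW_append]

theorem actW_mem_imageSet_append {p : Q} {x : List A} (hp : p ∈ imageSet δ x) (y : List A) :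
    actW δ p y ∈ imageSet δ (x ++ y) := by
  rw [imageSet_append]
  exact Finset.mem_image_of_mem _ hp

theorem imageSet_append_subset_right (x y : List A) : imageSet δ (x ++ y) ⊆ imageSet δ y := by
  rw [imageSet_append]
  exact Finset.image_subset_iff.mpr fun q _ => Finset.mem_image_of_mem _ (Finset.mem_univ q)

theorem wordRank_append_le_left (x y : List A) : wordRank δ (x ++ y) ≤ wordRank δ x := by
  rw [wordRank, imageSet_append]
  exact Finset.card_image_le

theorem wordRank_append_le_right (x y : List A) : wordRank δ (x ++ y) ≤ wordRank δ y :=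
  Finset.card_le_card (imageSet_append_subset_right δ x y)

theorem wordRank_append_lt {x : List A} {p q : Q} (hp : p ∈ imageSet δ x)
    (hq : q ∈ imageSet δ x) (hpq : p ≠ q) {y : List A} (hy : actW δ p y = actW δ q y) :
    wordRank δ (x ++ y) < wordRank δ x := by
  rw [wordRank, imageSet_append]
  exact Finset.card_image_le.lt_of_ne fun h => hpq (Finset.card_image_iff.mp h hp hq hy)

end Words

section Representation

variable {Q A : Type*} [Fintype Q] [DecidableEq Q] (δ : Q → A → Q)

theorem piLin_apply (u : List A) (v : Q → ℂ) (p : Q) :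
    piLin δ u v p = ∑ q ∈ Finset.univ.filter (fun q => actW δ q u = p), v q :=
  rfl

theorem piLin_append (x y : List A) : piLin δ (x ++ y) = piLin δ y ∘ₗ piLin δ x := by
  refine LinearMap.ext fun v => funext fun p => ?_
  simp only [LinearMap.comp_apply, piLin_apply]
  rw [← Finset.sum_fiberwise_of_maps_to (g := fun q => actW δ q x)
    (t := Finset.univ.filter (fun q' => actW δ q' y = p))
    (fun q hq => by simpa [actW_append] using hq)]
  refine Finset.sum_congr rfl fun q' hq' => Finset.sum_congr ?_ fun _ _ => rfl
  ext q
  simp only [Finset.mem_filter, Finset.mem_univ, true_and] at hq' ⊢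
  rw [actW_append]
  exact ⟨And.right, fun h => ⟨h ▸ hq', h⟩⟩

theorem piLin_nil : piLin δ ([] : List A) = LinearMap.id := by
  refine LinearMap.ext fun v => funext fun p => ?_
  rw [piLin_apply, LinearMap.id_apply, ← Finset.sum_singleton v p]
  refine Finset.sum_congr (Finset.ext fun q => ?_) fun _ _ => rfl
  rw [Finset.mem_filter, Finset.mem_singleton]
  simp [actW]

theorem piLin_congr {x y : List A} (h : ∀ q, actW δ q x = actW δ q y) :
    piLin δ x = piLin δ y :=
  LinearMap.ext fun v => funext fun p => by simp only [piLin_apply, h]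

theorem rhoR_append (x y : List A) : rhoR δ (x ++ y) = rhoR δ x * rhoR δ y := by
  refine Subtype.ext (congrArg MulOpposite.op (LinearMap.ext fun v => Subtype.ext ?_))
  simp [rhoR, rho, rhoEnd, piLin_append]

theorem rhoR_nil : rhoR δ ([] : List A) = 1 := by
  refine Subtype.ext (congrArg MulOpposite.op (LinearMap.ext fun v => Subtype.ext ?_))
  simp [rhoEnd, piLin_nil]

theorem rhoR_congr {x y : List A} (h : ∀ q, actW δ q x = actW δ q y) : rhoR δ x = rhoR δ y := by
  simp only [rhoR, rho, rhoEnd, piLin_congr δ h]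

/-- A word of rank at most one maps `v` to `(∑ q, v q) • q₀`, which vanishes on `w⊥`. -/
theorem rhoR_eq_zero_of_wordRank_le_one {x : List A} (hx : wordRank δ x ≤ 1) : rhoR δ x = 0 := by
  refine Subtype.ext (congrArg MulOpposite.op (LinearMap.ext fun v => Subtype.ext ?_))
  refine funext fun p => ?_
  simp only [rhoEnd, LinearMap.restrict_apply, piLin_apply, LinearMap.zero_apply,
    ZeroMemClass.coe_zero, Pi.zero_apply]
  by_cases hp : ∃ q, actW δ q x = p
  · obtain ⟨q₀, rfl⟩ := hp
    have hall : ∀ q, actW δ q x = actW δ q₀ x := fun q =>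
      Finset.card_le_one.mp hx _ (Finset.mem_image_of_mem _ (Finset.mem_univ q)) _
        (Finset.mem_image_of_mem _ (Finset.mem_univ q₀))
    simpa [hall] using (mem_Wperp _).mp v.2
  · push Not at hp
    simp [hp]

variable {k : ℕ} {nn : Fin k → ℕ}
  (e : Ralg δ →ₐ[ℂ] ∀ i : Fin k, Matrix (Fin (nn i)) (Fin (nn i)) ℂ)

theorem theta_append (x y : List A) (i : Fin k) :
    theta δ e (x ++ y) i = theta δ e x i * theta δ e y i := by
  simp [theta, rhoR_append]

theorem theta_nil (i : Fin k) : theta δ e ([] : List A) i = 1 := by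
  simp [theta, rhoR_nil]

theorem theta_congr {x y : List A} (h : ∀ q, actW δ q x = actW δ q y) (i : Fin k) :
    theta δ e x i = theta δ e y i := by
  rw [theta, theta, rhoR_congr δ h]

theorem theta_eq_zero_of_wordRank_le_one {x : List A} (hx : wordRank δ x ≤ 1) (i : Fin k) :
    theta δ e x i = 0 := by
  simp [theta, rhoR_eq_zero_of_wordRank_le_one δ hx]

end Representation

section FactorMonoid

variable {Q A : Type*} [Fintype Q] [DecidableEq Q] (δ : Q → A → Q) {k : ℕ} {nn : Fin k → ℕ}
  (e : Ralg δ →ₐ[ℂ] ∀ i : Fin k, Matrix (Fin (nn i)) (Fin (nn i)) ℂ)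

/-- `θ_i` factors through the finite transformation monoid of the automaton. -/
theorem finite_factorMonoid (i : Fin k) : (factorMonoid δ e i).Finite := by
  let T : List A → Q → Q := fun x q => actW δ q x
  refine (Set.finite_range fun φ : Set.range T => theta δ e φ.2.choose i).subset ?_
  rintro _ ⟨x, rfl⟩
  have hx : T x ∈ Set.range T := ⟨x, rfl⟩
  exact ⟨⟨T x, hx⟩, theta_congr δ e (fun q => congrFun hx.choose_spec q) i⟩

def factorSubmonoid (i : Fin k) : Submonoid (Matrix (Fin (nn i)) (Fin (nn i)) ℂ) where
  carrier := factorMonoid δ e i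
  mul_mem' := by
    rintro _ _ ⟨x, rfl⟩ ⟨y, rfl⟩
    exact ⟨x ++ y, theta_append δ e x y i⟩
  one_mem' := ⟨[], theta_nil δ e i⟩

theorem span_factorMonoid_eq_top (he_surj : Function.Surjective e) (i : Fin k) :
    Submodule.span ℂ (factorMonoid δ e i) = ⊤ := by
  have hclosure : (Submonoid.closure (factorMonoid δ e i) : Set (Matrix _ _ ℂ)) ⊆
      (Submodule.span ℂ (factorMonoid δ e i) : Set (Matrix (Fin (nn i)) (Fin (nn i)) ℂ)) :=
    fun _ hM => Submodule.subset_span (Submonoid.closure_le.mpr subset_rfl hM :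
      _ ∈ factorSubmonoid δ e i)
  rw [← Algebra.adjoin_eq_span_of_subset ℂ hclosure, eq_top_iff]
  have key : ∀ x : Ralg δ, e x i ∈ Algebra.adjoin ℂ (factorMonoid δ e i) := by
    rintro ⟨x, hx⟩
    induction hx using Algebra.adjoin_induction with
    | mem x hx =>
      obtain ⟨w, rfl⟩ := hx
      exact Algebra.subset_adjoin ⟨w, rfl⟩
    | algebraMap r =>
      exact (congrFun (e.commutes r) i).symm ▸ Subalgebra.algebraMap_mem _ r
    | add x y hx' hy' hx hy =>
      exact congrFun (map_add e ⟨x, hx'⟩ ⟨y, hy'⟩) i ▸ add_mem hx hy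
    | mul x y hx' hy' hx hy =>
      exact congrFun (map_mul e ⟨x, hx'⟩ ⟨y, hy'⟩) i ▸ mul_mem hx hy
  rintro M -
  obtain ⟨x, hx⟩ := he_surj (Pi.single i M)
  simpa [hx] using key x

end FactorMonoid

theorem Matrix.exists_mem_mul_mul_ne_zero {n K : Type*} [Fintype n] [DecidableEq n] [Field K]
    {S : Set (Matrix n n K)} (hS : Submodule.span K S = ⊤) {f : Matrix n n K} (hf : f ≠ 0) :
    ∃ m ∈ S, f * m * f ≠ 0 := by
  obtain ⟨p, q, hpq⟩ : ∃ p q, f p q ≠ 0 := by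
    by_contra! h
    exact hf (Matrix.ext h)
  by_contra! hS0
  let L : Matrix n n K →ₗ[K] Matrix n n K := LinearMap.mulRight K f ∘ₗ LinearMap.mulLeft K f
  have hker : Submodule.span K S ≤ LinearMap.ker L :=
    Submodule.span_le.mpr fun m hm => by simpa [L] using hS0 m hm
  have hsingle : f * Matrix.single q p 1 * f = 0 := by
    simpa [L] using hker (hS ▸ Submodule.mem_top : Matrix.single q p 1 ∈ Submodule.span K S)
  have hentry : (f * Matrix.single q p (1 : K) * f : Matrix n n K) p q = f p q * f p q := by
    rw [Matrix.mul_apply, Finset.sum_eq_single p (fun b _ hb => by simp [hb]) (by simp)]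
    simp
  rw [hsingle] at hentry
  exact mul_ne_zero hpq hpq hentry.symm

theorem IsZeroMinimalIdeal.exists_ne_zero {X : Type*} [Mul X] [Zero X] {M I : Set X}
    (hI : IsZeroMinimalIdeal M I) : ∃ x ∈ I, x ≠ 0 := by
  by_contra! h
  exact hI.2.2.1 (Set.eq_singleton_iff_unique_mem.mpr ⟨hI.2.1, h⟩)

theorem IsSetIdeal.superset_of_unique_zeroMinimal {X : Type*} [Mul X] [Zero X] {M I J : Set X}
    (hM : M.Finite) (huniq : ∀ J, IsZeroMinimalIdeal M J → J = I) (hJ : IsSetIdeal M J)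
    (hJ0 : (0 : X) ∈ J) (hJne : J ≠ {0}) : I ⊆ J := by
  let S := {J' : Set X | IsSetIdeal M J' ∧ (0 : X) ∈ J' ∧ J' ≠ {0}}
  have hS : S.Finite := hM.finite_subsets.subset fun J' hJ' => hJ'.1.1
  obtain ⟨J', hJ'J, hmin⟩ := hS.exists_le_minimal (a := J) ⟨hJ, hJ0, hJne⟩
  have hzm : IsZeroMinimalIdeal M J' :=
    ⟨hmin.1.1, hmin.1.2.1, hmin.1.2.2, fun K hK hK0 hKJ' hKne =>
      hKJ'.antisymm (hmin.2 ⟨hK, hK0, hKne⟩ hKJ')⟩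
  exact huniq J' hzm ▸ hJ'J

section Ideal

variable {Q A : Type*} [Fintype Q] [DecidableEq Q] (δ : Q → A → Q) {k : ℕ} {nn : Fin k → ℕ}
  (e : Ralg δ →ₐ[ℂ] ∀ i : Fin k, Matrix (Fin (nn i)) (Fin (nn i)) ℂ) {i : Fin k}
  {I : Set (Matrix (Fin (nn i)) (Fin (nn i)) ℂ)}

theorem IsSetIdeal.mul_theta_mem (hI : IsSetIdeal (factorMonoid δ e i) I) {g} (hg : g ∈ I)
    (y : List A) : g * theta δ e y i ∈ I :=
  (hI.2 _ ⟨y, rfl⟩ g hg).2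

/-- In a synchronizing automaton the words containing a factor `w` with `θ_i(w) ≠ 0` map onto
an ideal of `ℳ_i` that contains `0`, hence onto the unique `0`-minimal ideal. -/
theorem exists_theta_infix_eq (hsync : IsSynchronizing δ)
    (huniq : ∀ J, IsZeroMinimalIdeal (factorMonoid δ e i) J → J = I)
    {w : List A} (hw : theta δ e w i ≠ 0) {h} (hh : h ∈ I) :
    ∃ a b : List A, theta δ e (a ++ w ++ b) i = h := by
  obtain ⟨s, hs⟩ := hsync
  let J := Set.range fun ab : List A × List A => theta δ e (ab.1 ++ w ++ ab.2) i
  have hJ : IsSetIdeal (factorMonoid δ e i) J := by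
    refine ⟨fun _ ⟨ab, hab⟩ => ⟨_, hab⟩, ?_⟩
    rintro _ ⟨c, rfl⟩ _ ⟨⟨a, b⟩, rfl⟩
    refine ⟨⟨(c ++ a, b), ?_⟩, ⟨(a, b ++ c), ?_⟩⟩ <;> simp [← theta_append]
  have hJ0 : (0 : Matrix _ _ ℂ) ∈ J := by
    refine ⟨(s, []), theta_eq_zero_of_wordRank_le_one δ e ?_ i⟩
    simpa using (wordRank_append_le_left δ s w).trans (le_of_eq hs)
  have hJne : J ≠ {0} := fun hJ0' => hw (by simpa using hJ0'.subset ⟨([], []), rfl⟩)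
  obtain ⟨⟨a, b⟩, hab⟩ : h ∈ J :=
    hJ.superset_of_unique_zeroMinimal (finite_factorMonoid δ e i) huniq hJ0 hJne hh
  exact ⟨a, b, hab⟩

theorem rnkIdeal_le_wordRank {w : List A} (hw : theta δ e w i ∈ I) (hw0 : theta δ e w i ≠ 0) :
    rnkIdeal δ e i I ≤ wordRank δ w :=
  calc rnkIdeal δ e i I ≤ rnkElt δ e i (theta δ e w i) := Nat.sInf_le ⟨_, hw, hw0, rfl⟩
    _ ≤ wordRank δ w := Nat.sInf_le ⟨w, rfl, rfl⟩

theorem exists_wordRank_eq_rnkIdeal (hI : IsZeroMinimalIdeal (factorMonoid δ e i) I) :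
    ∃ m : List A, theta δ e m i ∈ I ∧ theta δ e m i ≠ 0 ∧ wordRank δ m = rnkIdeal δ e i I := by
  obtain ⟨h₁, hh₁, hh₁0⟩ := hI.exists_ne_zero
  obtain ⟨h, hh, hh0, hhr⟩ := Nat.sInf_mem (s := {r | ∃ h ∈ I, h ≠ 0 ∧ rnkElt δ e i h = r})
    ⟨_, h₁, hh₁, hh₁0, rfl⟩
  obtain ⟨w, hw⟩ := hI.1.1 hh
  obtain ⟨m, rfl, hmr⟩ := Nat.sInf_mem (s := {r | ∃ m : List A, theta δ e m i = h ∧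
    wordRank δ m = r}) ⟨_, w, hw, rfl⟩
  exact ⟨m, hh, hh0, hmr.trans hhr⟩

theorem two_le_rnkIdeal (hI : IsZeroMinimalIdeal (factorMonoid δ e i) I) :
    2 ≤ rnkIdeal δ e i I := by
  obtain ⟨m, -, hm0, hmr⟩ := exists_wordRank_eq_rnkIdeal δ e hI
  by_contra! hr
  exact hm0 (theta_eq_zero_of_wordRank_le_one δ e (by omega) i)

/-- With `m` of minimum rank, `θ_i(m) ≠ 0`, and `θ_i(a u b) = θ_i(m)`, choose `t` with
`θ_i(m) θ_i(t) θ_i(m) ≠ 0`: the word `a u b t m` has rank at most `Rnk(ℐ_i)` and generates `ℐ_i`. -/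
theorem exists_infix_representative (hsync : IsSynchronizing δ)
    (he_surj : Function.Surjective e) (hI : IsZeroMinimalIdeal (factorMonoid δ e i) I)
    (huniq : ∀ J, IsZeroMinimalIdeal (factorMonoid δ e i) J → J = I)
    {u : List A} (hu : theta δ e u i ≠ 0) {g} (hg : g ∈ I) :
    ∃ x : List A, InFactor u x ∧ theta δ e x i = g ∧ wordRank δ x ≤ rnkIdeal δ e i I := by
  obtain ⟨m, hmI, hm0, hmr⟩ := exists_wordRank_eq_rnkIdeal δ e hI
  obtain ⟨_, ⟨t, rfl⟩, ht⟩ :=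
    Matrix.exists_mem_mul_mul_ne_zero (span_factorMonoid_eq_top δ e he_surj i) hm0
  obtain ⟨a, b, hab⟩ := exists_theta_infix_eq δ e hsync huniq hu hmI
  let W := a ++ u ++ b ++ t ++ m
  have hW : theta δ e W i = theta δ e m i * theta δ e t i * theta δ e m i := by
    simp only [W, theta_append, ← hab]
  obtain ⟨c, d, hcd⟩ := exists_theta_infix_eq δ e hsync huniq (hW ▸ ht) hg
  refine ⟨c ++ W ++ d, ⟨c ++ a, b ++ t ++ m ++ d, by simp [W]⟩, hcd, ?_⟩
  calc wordRank δ (c ++ W ++ d) ≤ wordRank δ (c ++ W) := wordRank_append_le_left δ _ d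
    _ ≤ wordRank δ m := wordRank_append_le_right δ (c ++ (a ++ u ++ b ++ t)) m |>.trans_eq'
        (by simp [W])
    _ = rnkIdeal δ e i I := hmr

theorem uRepresents_of_wordRank_le {u w : List A}
    (hw : InFactor u w) (hwI : theta δ e w i ∈ I) (hwr : wordRank δ w ≤ rnkIdeal δ e i I) :
    URepresents δ e u i w (theta δ e w i) := by
  refine ⟨hw, rfl, or_iff_not_imp_left.mpr fun hw0 w' _ hw' => ?_⟩
  exact hwr.trans (rnkIdeal_le_wordRank δ e (hw' ▸ hwI) (hw' ▸ hw0))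

end Ideal

theorem le_packingNumber {α : Type*} [Fintype α] [DecidableEq α] {m r : ℕ}
    (S : Fin m → Finset α) (hr : 2 ≤ r) (hcard : ∀ j, (S j).card = r)
    (hinter : ∀ j l, j ≠ l → (S j ∩ S l).card ≤ 1) :
    m ≤ packingNumber 2 r (Fintype.card α) := by
  let T : Fin m → Finset (Fin (Fintype.card α)) :=
    fun j => (S j).map (Fintype.equivFin α).toEmbedding
  have hTcard : ∀ j, (T j).card = r := fun j => by simp [T, hcard]
  have hTinter : ∀ j l, j ≠ l → (T j ∩ T l).card ≤ 1 := fun j l hjl => by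
    simpa [T, ← Finset.map_inter] using hinter j l hjl
  have hT : Function.Injective T := fun j l hjl => by
    by_contra hne
    have := hTinter j l hne
    rw [hjl, Finset.inter_self, hTcard] at this
    omega
  refine le_csSup ⟨_, fun _ ⟨F, hF, _⟩ => hF ▸ Finset.card_le_univ F⟩
    ⟨Finset.univ.image T, by simp [Finset.card_image_of_injective _ hT], ?_, ?_⟩
  · simpa using hTcard
  · intro P hP
    by_contra! h2
    obtain ⟨_, hA, _, hB, hAB⟩ := Finset.one_lt_card.mp h2
    simp only [Finset.mem_filter, Finset.mem_image, Finset.mem_univ, true_and] at hA hB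
    obtain ⟨⟨j, rfl⟩, hPj⟩ := hA
    obtain ⟨⟨l, rfl⟩, hPl⟩ := hB
    have := Finset.card_le_card (Finset.subset_inter hPj hPl)
    have := hTinter j l fun h => hAB (h ▸ rfl)
    omega

section Descent

variable {Q A : Type*} [Fintype Q] [DecidableEq Q] (δ : Q → A → Q) {k : ℕ} {nn : Fin k → ℕ}
  (e : Ralg δ →ₐ[ℂ] ∀ i : Fin k, Matrix (Fin (nn i)) (Fin (nn i)) ℂ) {i : Fin k}
  {I : Set (Matrix (Fin (nn i)) (Fin (nn i)) ℂ)}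

theorem exists_shorter_of_packingNumber_lt (hI : IsSetIdeal (factorMonoid δ e i) I)
    {u x : List A} {g} (hxu : InFactor u x) (hxg : theta δ e x i = g)
    (hxr : wordRank δ x ≤ rnkIdeal δ e i I) (hg : g ∈ I) (hr : 2 ≤ rnkIdeal δ e i I)
    {y : List A} (hy : Relation.TransGen (sigmaRel δ e i u) (g * theta δ e y i) 0)
    (hlen : packingNumber 2 (rnkIdeal δ e i I) (Fintype.card Q) < y.length) :
    ∃ y' : List A, y'.length < y.length ∧
      Relation.TransGen (sigmaRel δ e i u) (g * theta δ e y' i) 0 := by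
  by_contra! hmin
  have hθ (y' : List A) : theta δ e (x ++ y') i = g * theta δ e y' i := by
    rw [theta_append, hxg]
  have hmem (y' : List A) : theta δ e (x ++ y') i ∈ I := hθ y' ▸ hI.mul_theta_mem δ e hg y'
  have hrank (y' : List A) : wordRank δ (x ++ y') ≤ rnkIdeal δ e i I :=
    (wordRank_append_le_left δ x y').trans hxr
  have hrep (y' : List A) : URepresents δ e u i (x ++ y') (g * theta δ e y' i) :=
    hθ y' ▸ uRepresents_of_wordRank_le δ e (hxu.append_right y') (hmem y') (hrank y')
  have hrank_eq (y' : List A) (hy' : y'.length < y.length) :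
      wordRank δ (x ++ y') = rnkIdeal δ e i I := by
    refine (hrank y').antisymm (rnkIdeal_le_wordRank δ e (hmem y') fun h0 => hmin y' hy' ?_)
    exact hθ y' ▸ h0 ▸ .single (Or.inl rfl)
  let S (j : Fin y.length) : Finset Q := imageSet δ (x ++ y.take j)
  obtain ⟨j, l, hjl, hSjl⟩ : ∃ j l : Fin y.length, j < l ∧ 1 < (S j ∩ S l).card := by
    by_contra! h
    refine hlen.not_ge (le_packingNumber S hr (fun j => hrank_eq _ (by simp)) fun j l hjl => ?_)
    rcases hjl.lt_or_gt with hjl | hjl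
    · exact h j l hjl
    · exact Finset.inter_comm (S j) (S l) ▸ h l j hjl
  obtain ⟨p, hp, q, hq, hpq⟩ := Finset.one_lt_card.mp hSjl
  rw [Finset.mem_inter] at hp hq
  let s := y.drop l
  have hy' : (y.take j ++ s).length < y.length := by simp [s]; omega
  have hxy' : x ++ (y.take j ++ s) = x ++ y.take j ++ s := (List.append_assoc ..).symm
  have hxy : x ++ y = x ++ y.take l ++ s := by simp [s]
  by_cases hps : actW δ p s = actW δ q s
  · have hlt := wordRank_append_lt δ hp.1 hq.1 hpq hps
    rw [← hxy', hrank_eq _ hy', hrank_eq _ (by simp)] at hlt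
    exact lt_irrefl _ hlt
  · have hcommon (t : Q) (ht : t ∈ S j ∧ t ∈ S l) :
        actW δ t s ∈ imageSet δ (x ++ (y.take j ++ s)) ∩ imageSet δ (x ++ y) := by
      rw [Finset.mem_inter, hxy', hxy]
      exact ⟨actW_mem_imageSet_append δ ht.1 s, actW_mem_imageSet_append δ ht.2 s⟩
    have hstep : sigmaRel δ e i u (g * theta δ e (y.take j ++ s) i) (g * theta δ e y i) :=
      Or.inr ⟨_, _, hrep _, hrep y,
        Finset.one_lt_card.mpr ⟨_, hcommon p hp, _, hcommon q hq, hps⟩⟩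
    exact hmin _ hy' (.head hstep hy)

end Descent

theorem stmt6_general {Q A : Type*} [Fintype Q] [DecidableEq Q] (δ : Q → A → Q)
    {k : ℕ} {nn : Fin k → ℕ}
    (e : Ralg δ →ₐ[ℂ] ∀ i : Fin k, Matrix (Fin (nn i)) (Fin (nn i)) ℂ)
    (he_surj : Function.Surjective e)
    (Ii : ∀ i : Fin k, Set (Matrix (Fin (nn i)) (Fin (nn i)) ℂ))
    (hIi : ∀ i : Fin k, IsZeroMinimalIdeal (factorMonoid δ e i) (Ii i))
    (hIuniq : ∀ (i : Fin k) (J : Set (Matrix (Fin (nn i)) (Fin (nn i)) ℂ)),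
      IsZeroMinimalIdeal (factorMonoid δ e i) J → J = Ii i)
    (hsync : IsSynchronizing δ)
    (u : List A) (i : Fin k) (hi : i ∈ suppW δ e u)
    (g : Matrix (Fin (nn i)) (Fin (nn i)) ℂ) (hg : g ∈ Ii i) :
    ∃ z : List A,
      z.length ≤ packingNumber 2 (rnkIdeal δ e i (Ii i)) (Fintype.card Q) ∧
      Relation.TransGen (sigmaRel δ e i u) (g * theta δ e z i) 0 := by
  obtain ⟨x, hxu, hxg, hxr⟩ :=
    exists_infix_representative δ e hsync he_surj (hIi i) (hIuniq i) hi hg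
  have hreach : ∃ n, ∃ y : List A, y.length = n ∧
      Relation.TransGen (sigmaRel δ e i u) (g * theta δ e y i) 0 := by
    obtain ⟨s, hs⟩ := hsync
    refine ⟨_, s, rfl, ?_⟩
    rw [theta_eq_zero_of_wordRank_le_one δ e (le_of_eq hs) i, mul_zero]
    exact .single (Or.inl rfl)
  classical
  obtain ⟨y, hylen, hy⟩ := Nat.find_spec hreach
  refine ⟨y, not_lt.mp fun hlen => ?_, hy⟩
  obtain ⟨y', hy'len, hy'⟩ := exists_shorter_of_packingNumber_lt δ e (hIi i).1 hxu hxg hxr hg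
    (two_le_rnkIdeal δ e (hIi i)) hy hlen
  exact Nat.find_min hreach (hylen ▸ hy'len) ⟨y', rfl, hy'⟩

theorem stmt6 {Q A : Type*} [Fintype Q] [DecidableEq Q] (δ : Q → A → Q)
    {k : ℕ} {nn : Fin k → ℕ}
    (e : Ralg δ →ₐ[ℂ] ∀ i : Fin k, Matrix (Fin (nn i)) (Fin (nn i)) ℂ)
    (he_surj : Function.Surjective e)
    (he_ker : ∀ x : Ralg δ, e x = 0 ↔ (x : (Module.End ℂ (Wperp Q))ᵐᵒᵖ) ∈ RadSet δ)
    (Ii : ∀ i : Fin k, Set (Matrix (Fin (nn i)) (Fin (nn i)) ℂ))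
    (hIi : ∀ i : Fin k, IsZeroMinimalIdeal (factorMonoid δ e i) (Ii i))
    (hIuniq : ∀ (i : Fin k) (J : Set (Matrix (Fin (nn i)) (Fin (nn i)) ℂ)),
      IsZeroMinimalIdeal (factorMonoid δ e i) J → J = Ii i)
    (hn : 2 ≤ Fintype.card Q) (hsync : IsSynchronizing δ)
    (v u : List A) (hu : IsVMinimal δ e v u) (i : Fin k) (hi : i ∈ suppW δ e u)
    (g : Matrix (Fin (nn i)) (Fin (nn i)) ℂ) (hg : g ∈ Ii i) :
    ∃ z : List A,
      z.length ≤ packingNumber 2 (rnkIdeal δ e i (Ii i)) (Fintype.card Q) ∧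
      Relation.TransGen (sigmaRel δ e i u) (g * theta δ e z i) 0 :=
  stmt6_general δ e he_surj Ii hIi hIuniq hsync u i hi g hg

end
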